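/- Let X = {X_s, s ≥ 0} be a real-valued stochastic process with independent increments whose increment characteristic functions satisfy E[e^{iu(X_t − X_s)}] = e^{−(t−s)ψ(u)} for all 0 ≤ s ≤ t and u ∈ ℝ, for some function ψ : ℝ → ℂ. Let θ ∈ ℝ be such that Re[ψ(θ)] > 0 and Re[ψ(2θ)] > 0. Then the characteristic functions of the increments of X satisfy hypotheses (H^θ1), (H^θ2) and (H^θ3), with the constant in (H^θ2) given by c(θ) = √(|ψ(θ)|² / (2 Re[ψ(θ)])). -/

import Mathlib

open MeasureTheory ProbabilityTheory Complex Filter Topology Set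

noncomputable section

/-- The characteristic function of the increment `X_y - X_x` evaluated at `θ`:
`φ_{X_y - X_x}(θ) = E[exp(i θ (X_y - X_x))]`. -/
def charIncr {Ω : Type*} [MeasurableSpace Ω] (P : Measure Ω) (X : ℝ → Ω → ℝ)
    (x y θ : ℝ) : ℂ :=
  ∫ ω, Complex.exp (Complex.I * θ * (X y ω - X x ω)) ∂P

/-- A real-valued process has independent increments. -/
def HasIndepIncrements {Ω : Type*} [MeasurableSpace Ω] (P : Measure Ω)
    (X : ℝ → Ω → ℝ) : Prop :=
  ∀ (n : ℕ) (τ : Fin (n + 1) → ℝ), Monotone τ → (∀ i, 0 ≤ τ i) →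
    iIndepFun (m := fun _ => Real.measurableSpace)
      (fun i : Fin n => fun ω => X (τ i.succ) ω - X (τ i.castSucc) ω) P

/-- Hypothesis (H^θ1). -/
def HypOne {Ω : Type*} [MeasurableSpace Ω] (P : Measure Ω) (X : ℝ → Ω → ℝ)
    (θ T : ℝ) : Prop :=
  ∃ K : ℝ, ∀ ε : ℝ, 0 < ε → ∀ s t : ℝ, 0 ≤ s → s < t → t ≤ T →
    ε ^ 2 * ∫ y in (2 * s / ε ^ 2)..(2 * t / ε ^ 2),
        ∫ x in (2 * s / ε ^ 2)..y, ‖charIncr P X x y θ‖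
      ≤ K * (t - s)

/-- Hypothesis (H^θ2), with constant `c`. -/
def HypTwo {Ω : Type*} [MeasurableSpace Ω] (P : Measure Ω) (X : ℝ → Ω → ℝ)
    (θ T c : ℝ) : Prop :=
  ∀ s t : ℝ, 0 ≤ s → s < t → t ≤ T →
    Tendsto (fun ε : ℝ =>
        (↑(ε ^ 2 * c ^ 2) : ℂ) * ∫ x in (2 * s / ε ^ 2)..(2 * t / ε ^ 2),
          ∫ y in (2 * s / ε ^ 2)..x,
            (charIncr P X y x θ + charIncr P X y x (-θ)))
      (𝓝[>] 0) (𝓝 ((2 * (t - s) : ℝ) : ℂ))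

/-- Hypothesis (H^θ3). -/
def HypThree {Ω : Type*} [MeasurableSpace Ω] (P : Measure Ω) (X : ℝ → Ω → ℝ)
    (θ T : ℝ) : Prop :=
  ∀ s t : ℝ, 0 ≤ s → s < t → t ≤ T →
    Tendsto (fun ε : ℝ =>
        ε ^ 2 * ∫ y in (2 * s / ε ^ 2)..(2 * t / ε ^ 2),
          ∫ x in (2 * s / ε ^ 2)..y,
            ‖charIncr P X x y θ‖ * ‖charIncr P X (2 * s / ε ^ 2) x (2 * θ)‖)
      (𝓝[>] 0) (𝓝 0)

/-- A standard real Brownian motion on `[0, T]`. -/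
def IsStdBMOn {Ω : Type*} [MeasurableSpace Ω] (P : Measure Ω)
    (B : ℝ → Ω → ℝ) (T : ℝ) : Prop :=
  (∀ t ∈ Set.Icc (0 : ℝ) T, Measurable (B t)) ∧
  (∀ᵐ ω ∂P, B 0 ω = 0) ∧
  (∀ᵐ ω ∂P, ContinuousOn (fun t => B t ω) (Set.Icc 0 T)) ∧
  (∀ s t : ℝ, 0 ≤ s → s ≤ t → t ≤ T →
    P.map (fun ω => B t ω - B s ω) = gaussianReal 0 (Real.toNNReal (t - s))) ∧
  (∀ (n : ℕ) (τ : Fin (n + 1) → ℝ), Monotone τ → (∀ i, τ i ∈ Set.Icc (0 : ℝ) T) →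
    iIndepFun (m := fun _ => Real.measurableSpace)
      (fun i : Fin n => fun ω => B (τ i.succ) ω - B (τ i.castSucc) ω) P)

/-- A complex Brownian motion on `[0, T]`: its real and imaginary parts are two
independent standard real Brownian motions. -/
def IsComplexBMOn {Ω : Type*} [MeasurableSpace Ω] (P : Measure Ω)
    (Z : ℝ → Ω → ℂ) (T : ℝ) : Prop :=
  IsStdBMOn P (fun t ω => (Z t ω).re) T ∧
  IsStdBMOn P (fun t ω => (Z t ω).im) T ∧
  IndepFun (fun ω => fun t : ℝ => (Z t ω).re) (fun ω => fun t : ℝ => (Z t ω).im) P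

/-- The (Kac–Stroock type) approximation process
`x_ε^θ(t) = ε c(θ) ∫_0^{2t/ε²} e^{iθ X_s} ds`. -/
def approxProc {Ω : Type*} [MeasurableSpace Ω] (X : ℝ → Ω → ℝ)
    (θ c ε t : ℝ) (ω : Ω) : ℂ :=
  (↑(ε * c) : ℂ) * ∫ s in (0 : ℝ)..(2 * t / ε ^ 2),
    Complex.exp (Complex.I * θ * X s ω)

instance (T : ℝ) : MeasurableSpace C(Set.Icc (0 : ℝ) T, ℂ) := borel _


/-!
Under the Lévy form `φ_{X_y - X_x}(u) = exp (-(y - x) ψ(u))`, the modulus of the increment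
characteristic function is `exp (-(y - x) Re ψ(u))` and `φ(-θ) = conj φ(θ)`, so every double
integral in (H1)–(H3) is an explicit exponential integral over a triangle of side
`L = 2(t - s)/ε²`. For (H1) the inner integral is at most `1 / Re ψ(θ)`, so the double integral
is `O(L)`. For (H2) the closed form is `L (1/ψ + 1/conj ψ) + O(1)`, and `c²` is chosen so that
`c² (1/ψ + 1/conj ψ) = 1`. For (H3) the product of the two exponentials decays like
`exp (-κ (y - a))` with `κ = min (Re ψ(θ)) (Re ψ(2θ))`, so the double integral stays bounded
as `L → ∞` and `ε²` times it tends to `0`.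
-/

open ComplexConjugate

lemma integral_exp_neg_mul {c : ℝ} (hc : c ≠ 0) (L : ℝ) :
    ∫ u in 0..L, Real.exp (-u * c) = (1 - Real.exp (-L * c)) / c := by
  simp_rw [neg_mul]
  rw [intervalIntegral.integral_comp_mul_right (fun v => Real.exp (-v)) hc,
    intervalIntegral.integral_comp_neg]
  simp only [zero_mul, neg_zero, integral_exp, Real.exp_zero, smul_eq_mul]
  field_simp

lemma integral_cexp_neg_mul {μ : ℂ} (hμ : μ ≠ 0) (L : ℝ) :
    ∫ u in 0..L, cexp (-u * μ) = (1 - cexp (-L * μ)) / μ := by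
  simp_rw [show ∀ u : ℝ, -(u : ℂ) * μ = -μ * u from fun u => by ring]
  rw [integral_exp_mul_complex (neg_ne_zero.mpr hμ)]
  simp only [ofReal_zero, mul_zero, Complex.exp_zero]
  field_simp
  ring

lemma integral_exp_neg_mul_le {c : ℝ} (hc : 0 < c) (L : ℝ) :
    ∫ u in 0..L, Real.exp (-u * c) ≤ 1 / c := by
  rw [integral_exp_neg_mul hc.ne']
  gcongr
  linarith [Real.exp_pos (-L * c)]

lemma integral_cexp_neg_mul_sub {μ : ℂ} (hμ : μ ≠ 0) (a x : ℝ) :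
    ∫ y in a..x, cexp (-(x - y) * μ) = (1 - cexp (-(x - a) * μ)) / μ := by
  have := intervalIntegral.integral_comp_sub_left (fun u : ℝ => cexp (-u * μ))
    (a := a) (b := x) x
  simp only [sub_self, ofReal_sub] at this
  rw [this, integral_cexp_neg_mul hμ, ofReal_sub]

/-- `∫ x in 0..L, ∫ y in 0..x, exp (-(x - y) μ)`, in closed form. -/
def doubleIntegralExp (μ : ℂ) (L : ℝ) : ℂ :=
  (L * μ - 1 + cexp (-L * μ)) / μ ^ 2

lemma integral_one_sub_cexp_neg_mul_sub_div {μ : ℂ} (hμ : μ ≠ 0) (a b : ℝ) :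
    ∫ x in a..b, (1 - cexp (-(x - a) * μ)) / μ = doubleIntegralExp μ (b - a) := by
  have := intervalIntegral.integral_comp_sub_right (fun u : ℝ => (1 - cexp (-u * μ)) / μ)
    (a := a) (b := b) a
  simp only [sub_self, ofReal_sub] at this
  rw [this, intervalIntegral.integral_div, intervalIntegral.integral_sub intervalIntegrable_const
    ((by fun_prop : Continuous fun u : ℝ => cexp (-u * μ)).intervalIntegrable _ _),
    integral_cexp_neg_mul hμ, intervalIntegral.integral_const]
  simp only [doubleIntegralExp, sub_zero, real_smul, mul_one]
  field_simp
  ring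

lemma integral_integral_cexp_add_cexp {μ ν : ℂ} (hμ : μ ≠ 0) (hν : ν ≠ 0) (a b : ℝ) :
    ∫ x in a..b, ∫ y in a..x, (cexp (-(x - y) * μ) + cexp (-(x - y) * ν)) =
      doubleIntegralExp μ (b - a) + doubleIntegralExp ν (b - a) := by
  have inner : ∀ x : ℝ, ∫ y in a..x, (cexp (-(x - y) * μ) + cexp (-(x - y) * ν)) =
      (1 - cexp (-(x - a) * μ)) / μ + (1 - cexp (-(x - a) * ν)) / ν := fun x => by
    rw [intervalIntegral.integral_add (Continuous.intervalIntegrable (by fun_prop) _ _)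
      (Continuous.intervalIntegrable (by fun_prop) _ _),
      integral_cexp_neg_mul_sub hμ, integral_cexp_neg_mul_sub hν]
  simp_rw [inner]
  rw [intervalIntegral.integral_add (Continuous.intervalIntegrable (by fun_prop) _ _)
    (Continuous.intervalIntegrable (by fun_prop) _ _),
    integral_one_sub_cexp_neg_mul_sub_div hμ, integral_one_sub_cexp_neg_mul_sub_div hν]

lemma integral_mono_on_of_nonneg {f g : ℝ → ℝ} {a b : ℝ} (hab : a ≤ b)
    (hf : ∀ x ∈ Icc a b, 0 ≤ f x) (hg : IntervalIntegrable g volume a b)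
    (hfg : ∀ x ∈ Icc a b, f x ≤ g x) : ∫ x in a..b, f x ≤ ∫ x in a..b, g x := by
  by_cases hfi : IntervalIntegrable f volume a b
  · exact intervalIntegral.integral_mono_on hab hfi hg hfg
  · rw [intervalIntegral.integral_undef hfi]
    exact intervalIntegral.integral_nonneg hab fun x hx => (hf x hx).trans (hfg x hx)

lemma integral_integral_exp_neg_mul_le {r : ℝ} (hr : 0 < r) {a b : ℝ} (hab : a ≤ b) :
    ∫ y in a..b, ∫ x in a..y, Real.exp (-(y - x) * r) ≤ (b - a) / r := by
  have inner_le : ∀ y, ∫ x in a..y, Real.exp (-(y - x) * r) ≤ 1 / r := by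
    intro y
    rw [intervalIntegral.integral_comp_sub_left (fun u => Real.exp (-u * r)), sub_self]
    exact integral_exp_neg_mul_le hr _
  calc ∫ y in a..b, ∫ x in a..y, Real.exp (-(y - x) * r)
      ≤ ∫ _ in a..b, 1 / r :=
        integral_mono_on_of_nonneg hab
          (fun y hy => intervalIntegral.integral_nonneg hy.1 fun _ _ => (Real.exp_pos _).le)
          intervalIntegrable_const fun y _ => inner_le y
    _ = (b - a) / r := by simp [div_eq_mul_inv]

lemma mul_exp_neg_mul_le {κ : ℝ} (hκ : 0 < κ) (u : ℝ) :
    u * Real.exp (-u * κ) ≤ 2 / κ * Real.exp (-u * (κ / 2)) := by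
  have hsplit : Real.exp (-u * κ) = Real.exp (-u * (κ / 2)) * Real.exp (-u * (κ / 2)) := by
    rw [← Real.exp_add]; ring_nf
  have hu : u ≤ 2 / κ * Real.exp (u * (κ / 2)) := by
    rw [div_mul_eq_mul_div, le_div_iff₀ hκ]
    linarith [Real.add_one_le_exp (u * (κ / 2))]
  calc u * Real.exp (-u * κ)
      ≤ 2 / κ * Real.exp (u * (κ / 2)) *
          (Real.exp (-u * (κ / 2)) * Real.exp (-u * (κ / 2))) := by
        rw [hsplit]; gcongr
    _ = 2 / κ * Real.exp (-u * (κ / 2)) := by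
        rw [← mul_assoc, mul_assoc (2 / κ), ← Real.exp_add]; ring_nf; simp

lemma integral_integral_exp_mul_exp_le {r m : ℝ} (hr : 0 < r) (hm : 0 < m) {a b : ℝ}
    (hab : a ≤ b) :
    ∫ y in a..b, ∫ x in a..y, Real.exp (-(y - x) * r) * Real.exp (-(x - a) * m)
      ≤ 4 / min r m ^ 2 := by
  set κ := min r m
  have hκ : 0 < κ := lt_min hr hm
  have inner_le : ∀ y ∈ Icc a b,
      ∫ x in a..y, Real.exp (-(y - x) * r) * Real.exp (-(x - a) * m)
        ≤ 2 / κ * Real.exp (-(y - a) * (κ / 2)) := by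
    intro y hy
    calc ∫ x in a..y, Real.exp (-(y - x) * r) * Real.exp (-(x - a) * m)
        ≤ ∫ _ in a..y, Real.exp (-(y - a) * κ) := by
          refine intervalIntegral.integral_mono_on hy.1
            (Continuous.intervalIntegrable (by fun_prop) _ _) intervalIntegrable_const ?_
          intro x hx
          rw [← Real.exp_add, Real.exp_le_exp]
          nlinarith [mul_nonneg (sub_nonneg.mpr hx.2) (sub_nonneg.mpr (min_le_left r m)),
            mul_nonneg (sub_nonneg.mpr hx.1) (sub_nonneg.mpr (min_le_right r m))]
      _ = (y - a) * Real.exp (-(y - a) * κ) := by simp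
      _ ≤ 2 / κ * Real.exp (-(y - a) * (κ / 2)) := mul_exp_neg_mul_le hκ _
  calc ∫ y in a..b, ∫ x in a..y, Real.exp (-(y - x) * r) * Real.exp (-(x - a) * m)
      ≤ ∫ y in a..b, 2 / κ * Real.exp (-(y - a) * (κ / 2)) :=
        integral_mono_on_of_nonneg hab
          (fun y hy => intervalIntegral.integral_nonneg hy.1 fun _ _ => by positivity)
          (Continuous.intervalIntegrable (by fun_prop) _ _) inner_le
    _ = 2 / κ * ∫ u in 0..b - a, Real.exp (-u * (κ / 2)) := by
        rw [intervalIntegral.integral_const_mul,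
          intervalIntegral.integral_comp_sub_right (fun u => Real.exp (-u * (κ / 2))), sub_self]
    _ ≤ 2 / κ * (1 / (κ / 2)) := by gcongr; exact integral_exp_neg_mul_le (by positivity) _
    _ = 4 / κ ^ 2 := by field_simp; ring

lemma norm_cexp_neg_mul_sub_one_div_sq_le {w : ℂ} (hw : 0 ≤ w.re) {L : ℝ} (hL : 0 ≤ L) :
    ‖(cexp (-L * w) - 1) / w ^ 2‖ ≤ 2 / ‖w‖ ^ 2 := by
  have hexp : ‖cexp (-L * w)‖ ≤ 1 := by
    rw [norm_exp, Real.exp_le_one_iff, ← ofReal_neg, re_ofReal_mul]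
    nlinarith
  rw [norm_div, norm_pow]
  gcongr
  calc ‖cexp (-L * w) - 1‖ ≤ ‖cexp (-L * w)‖ + ‖(1 : ℂ)‖ := norm_sub_le _ _
    _ ≤ 2 := by rw [norm_one]; linarith

lemma norm_mul_add_conj_sub_le {z : ℂ} (hz : 0 < z.re) {L : ℝ} (hL : 0 ≤ L) :
    ‖((‖z‖ ^ 2 / (2 * z.re) : ℝ) : ℂ) *
        (doubleIntegralExp z L + doubleIntegralExp (conj z) L) - L‖ ≤ 2 / z.re := by
  have hz0 : z ≠ 0 := fun h => by simp [h] at hz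
  have hzc0 : conj z ≠ 0 := (map_ne_zero _).mpr hz0
  have hnz : 0 < ‖z‖ := norm_pos_iff.mpr hz0
  set c := ‖z‖ ^ 2 / (2 * z.re)
  have hc : 0 < c := by positivity
  have hc2 : c * (2 * z.re) = ‖z‖ ^ 2 := div_mul_cancel₀ _ (by positivity)
  -- `c` is the harmonic-mean normalisation `1/c = 1/z + 1/conj z`.
  have hkey : (c : ℂ) * (z + conj z) = z * conj z := by
    rw [add_conj, mul_conj, normSq_eq_norm_sq, ← hc2]
    push_cast
    ring
  have hsplit : (c : ℂ) * (doubleIntegralExp z L + doubleIntegralExp (conj z) L) - L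
      = c * ((cexp (-L * z) - 1) / z ^ 2 + (cexp (-L * conj z) - 1) / conj z ^ 2) := by
    simp only [doubleIntegralExp]
    field_simp
    linear_combination (L * z * conj z) * hkey
  rw [hsplit, norm_mul, norm_real, Real.norm_of_nonneg hc.le]
  calc c * ‖(cexp (-L * z) - 1) / z ^ 2 + (cexp (-L * conj z) - 1) / conj z ^ 2‖
      ≤ c * (2 / ‖z‖ ^ 2 + 2 / ‖z‖ ^ 2) := by
        gcongr
        refine (norm_add_le _ _).trans (add_le_add ?_ ?_)
        · exact norm_cexp_neg_mul_sub_one_div_sq_le hz.le hL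
        · simpa using norm_cexp_neg_mul_sub_one_div_sq_le (w := conj z) (by simpa using hz.le) hL
    _ = 2 / z.re := by rw [← add_div, ← hc2]; field_simp; ring

lemma integral_integral_congr_of_le {E : Type*} [NormedAddCommGroup E] [NormedSpace ℝ E]
    {f g : ℝ → ℝ → E} {a b : ℝ} (hab : a ≤ b)
    (h : ∀ u v, a ≤ v → v ≤ u → u ≤ b → f u v = g u v) :
    ∫ u in a..b, ∫ v in a..u, f u v = ∫ u in a..b, ∫ v in a..u, g u v := by
  refine intervalIntegral.integral_congr fun u hu => ?_
  rw [uIcc_of_le hab] at hu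
  refine intervalIntegral.integral_congr fun v hv => ?_
  rw [uIcc_of_le hu.1] at hv
  exact h u v hv.1 hv.2 hu.2

lemma tendsto_nhdsWithin_zero_of_le_sq_mul {f : ℝ → ℝ} {C : ℝ} (h0 : ∀ ε > 0, 0 ≤ f ε)
    (h : ∀ ε > 0, f ε ≤ ε ^ 2 * C) : Tendsto f (𝓝[>] 0) (𝓝 0) := by
  have hlim : Tendsto (fun ε : ℝ => ε ^ 2 * C) (𝓝 0) (𝓝 0) :=
    (by fun_prop : Continuous fun ε : ℝ => ε ^ 2 * C).tendsto' 0 0 (by simp)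
  exact squeeze_zero' (eventually_nhdsWithin_of_forall h0) (eventually_nhdsWithin_of_forall h)
    (hlim.mono_left nhdsWithin_le_nhds)

section LevyExponent

variable {Ω : Type*} [MeasurableSpace Ω] {P : Measure Ω} {X : ℝ → Ω → ℝ}

lemma charIncr_neg (x y u : ℝ) : charIncr P X x y (-u) = conj (charIncr P X x y u) := by
  rw [charIncr, charIncr, ← integral_conj]
  congr 1
  funext ω
  rw [← exp_conj]
  congr 1
  simp only [map_mul, map_sub, conj_I, conj_ofReal]
  push_cast
  ring

def HasLevyCharIncr (P : Measure Ω) (X : ℝ → Ω → ℝ) (ψ : ℝ → ℂ) : Prop :=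
  ∀ u : ℝ, ∀ s t : ℝ, 0 ≤ s → s ≤ t → charIncr P X s t u = cexp (-(t - s) * ψ u)

variable {ψ : ℝ → ℂ}

namespace HasLevyCharIncr

lemma norm_charIncr (h : HasLevyCharIncr P X ψ) (u : ℝ) {x y : ℝ} (hx : 0 ≤ x)
    (hxy : x ≤ y) :
    ‖charIncr P X x y u‖ = Real.exp (-(y - x) * (ψ u).re) := by
  rw [h u x y hx hxy, norm_exp, ← ofReal_sub, ← ofReal_neg, re_ofReal_mul]

lemma charIncr_add_charIncr_neg (h : HasLevyCharIncr P X ψ) (θ : ℝ) {x y : ℝ} (hy : 0 ≤ y)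
    (hyx : y ≤ x) :
    charIncr P X y x θ + charIncr P X y x (-θ) =
      cexp (-(x - y) * ψ θ) + cexp (-(x - y) * conj (ψ θ)) := by
  rw [charIncr_neg, h θ y x hy hyx, ← exp_conj]
  simp only [map_mul, map_neg, map_sub, conj_ofReal]

lemma hypOne (h : HasLevyCharIncr P X ψ) {θ : ℝ} (hθ : 0 < (ψ θ).re) (T : ℝ) :
    HypOne P X θ T := by
  refine ⟨2 / (ψ θ).re, fun ε hε s t hs hst _ => ?_⟩
  have hab : 2 * s / ε ^ 2 ≤ 2 * t / ε ^ 2 := by gcongr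
  have ha : 0 ≤ 2 * s / ε ^ 2 := by positivity
  rw [integral_integral_congr_of_le hab fun y x hax hxy _ =>
    h.norm_charIncr θ (ha.trans hax) hxy]
  calc ε ^ 2 * ∫ y in 2 * s / ε ^ 2..2 * t / ε ^ 2,
        ∫ x in 2 * s / ε ^ 2..y, Real.exp (-(y - x) * (ψ θ).re)
      ≤ ε ^ 2 * ((2 * t / ε ^ 2 - 2 * s / ε ^ 2) / (ψ θ).re) := by
        gcongr
        exact integral_integral_exp_neg_mul_le hθ hab
    _ = 2 / (ψ θ).re * (t - s) := by field_simp

lemma hypTwo (h : HasLevyCharIncr P X ψ) {θ : ℝ} (hθ : 0 < (ψ θ).re) (T : ℝ) :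
    HypTwo P X θ T (Real.sqrt (‖ψ θ‖ ^ 2 / (2 * (ψ θ).re))) := by
  intro s t hs hst _
  set z := ψ θ
  have hz0 : z ≠ 0 := fun hz => by simp [hz] at hθ
  have hc2 : Real.sqrt (‖z‖ ^ 2 / (2 * z.re)) ^ 2 = ‖z‖ ^ 2 / (2 * z.re) :=
    Real.sq_sqrt (by positivity)
  rw [tendsto_iff_norm_sub_tendsto_zero]
  refine tendsto_nhdsWithin_zero_of_le_sq_mul (C := 2 / z.re) (fun _ _ => norm_nonneg _)
    fun ε hε => ?_
  have ha : 0 ≤ 2 * s / ε ^ 2 := by positivity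
  have hab : 2 * s / ε ^ 2 ≤ 2 * t / ε ^ 2 := by gcongr
  have hba : ε ^ 2 * (2 * t / ε ^ 2 - 2 * s / ε ^ 2) = 2 * (t - s) := by field_simp
  set a := 2 * s / ε ^ 2
  set b := 2 * t / ε ^ 2
  rw [integral_integral_congr_of_le hab fun x y hay hyx _ =>
      h.charIncr_add_charIncr_neg θ (ha.trans hay) hyx,
    integral_integral_cexp_add_cexp hz0 ((map_ne_zero _).mpr hz0)]
  have hscale : ((ε ^ 2 * Real.sqrt (‖z‖ ^ 2 / (2 * z.re)) ^ 2 : ℝ) : ℂ) *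
        (doubleIntegralExp z (b - a) + doubleIntegralExp (conj z) (b - a))
        - ((2 * (t - s) : ℝ) : ℂ)
      = ((ε ^ 2 : ℝ) : ℂ) * (((‖z‖ ^ 2 / (2 * z.re) : ℝ) : ℂ) *
        (doubleIntegralExp z (b - a) + doubleIntegralExp (conj z) (b - a))
        - ((b - a : ℝ) : ℂ)) := by
    rw [hc2, ← hba]
    push_cast
    ring
  rw [hscale, norm_mul, norm_real, Real.norm_of_nonneg (sq_nonneg ε)]
  gcongr
  exact norm_mul_add_conj_sub_le hθ (sub_nonneg.mpr hab)

lemma hypThree (h : HasLevyCharIncr P X ψ) {θ : ℝ} (hθ : 0 < (ψ θ).re)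
    (h2θ : 0 < (ψ (2 * θ)).re) (T : ℝ) : HypThree P X θ T := by
  intro s t hs hst _
  refine tendsto_nhdsWithin_zero_of_le_sq_mul (C := 4 / min (ψ θ).re (ψ (2 * θ)).re ^ 2)
    (fun ε hε => ?_) fun ε hε => ?_
  · have hab : 2 * s / ε ^ 2 ≤ 2 * t / ε ^ 2 := by gcongr
    exact mul_nonneg (sq_nonneg ε) (intervalIntegral.integral_nonneg hab fun y hy =>
      intervalIntegral.integral_nonneg hy.1 fun _ _ => by positivity)
  · have ha : 0 ≤ 2 * s / ε ^ 2 := by positivity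
    have hab : 2 * s / ε ^ 2 ≤ 2 * t / ε ^ 2 := by gcongr
    rw [integral_integral_congr_of_le hab fun y x hax hxy _ => by
      rw [h.norm_charIncr θ (ha.trans hax) hxy, h.norm_charIncr (2 * θ) ha hax]]
    gcongr
    exact integral_integral_exp_mul_exp_le hθ h2θ hab

end HasLevyCharIncr

end LevyExponent

theorem levy_exponent_satisfies_hypotheses_general
    {Ω : Type*} [MeasurableSpace Ω] (P : Measure Ω)
    (X : ℝ → Ω → ℝ)
    (ψ : ℝ → ℂ)
    (hchar : ∀ u : ℝ, ∀ s t : ℝ, 0 ≤ s → s ≤ t →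
      charIncr P X s t u = Complex.exp (-(t - s) * ψ u))
    (T : ℝ) (θ : ℝ)
    (hθ : 0 < (ψ θ).re) (h2θ : 0 < (ψ (2 * θ)).re) :
    HypOne P X θ T ∧
    HypTwo P X θ T (Real.sqrt (‖ψ θ‖ ^ 2 / (2 * (ψ θ).re))) ∧
    HypThree P X θ T :=
  ⟨HasLevyCharIncr.hypOne hchar hθ T, HasLevyCharIncr.hypTwo hchar hθ T,
    HasLevyCharIncr.hypThree hchar hθ h2θ T⟩

/-- a process with independent increments whose increment
characteristic functions are of Lévy exponential form satisfies (H^θ1), (H^θ2),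
(H^θ3) when `Re[ψ(θ)] > 0` and `Re[ψ(2θ)] > 0`. -/
theorem levy_exponent_satisfies_hypotheses
    {Ω : Type*} [MeasurableSpace Ω] (P : Measure Ω) [IsProbabilityMeasure P]
    (X : ℝ → Ω → ℝ) (hXmeas : ∀ s : ℝ, Measurable (X s))
    (hIndep : HasIndepIncrements P X)
    (ψ : ℝ → ℂ)
    (hchar : ∀ u : ℝ, ∀ s t : ℝ, 0 ≤ s → s ≤ t →
      charIncr P X s t u = Complex.exp (-(t - s) * ψ u))
    (T : ℝ) (hT : 0 < T) (θ : ℝ)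
    (hθ : 0 < (ψ θ).re) (h2θ : 0 < (ψ (2 * θ)).re) :
    HypOne P X θ T ∧
    HypTwo P X θ T (Real.sqrt (‖ψ θ‖ ^ 2 / (2 * (ψ θ).re))) ∧
    HypThree P X θ T :=
  levy_exponent_satisfies_hypotheses_general P X ψ hchar T θ hθ h2θ

end
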